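/- Suppose h3 = 0 (no direct channel). Then the constant Markov kernel κ₀ defined by κ₀(u) := (1/2) • N(h1,1) + (1/2) • N(−h1,1) for every u ∈ ℝ (i.e., the relay outputs an independent copy distributed as its input's marginal law) satisfies (μ_x.bind κ₀).bind G = μ_x.bind G for every x ∈ ℝ, and κ₀(u) ≠ δ_u for every u ∈ ℝ; hence the observation channel is manipulable. -/
import Mathlib


open MeasureTheory ProbabilityTheory
open scoped ENNReal

/-- Bayes posterior weight of source symbol `+1` given direct observation `x`. -/
noncomputable def mixWeight (h3 x : ℝ) : ℝ :=
  Real.exp (-(x - h3) ^ 2 / 2) /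
    (Real.exp (-(x - h3) ^ 2 / 2) + Real.exp (-(x + h3) ^ 2 / 2))

/-- Conditional law of the relay's observation given direct observation `x`:
`μ_x = w(x) • N(h1,1) + (1 - w(x)) • N(-h1,1)`. -/
noncomputable def muX (h1 h3 x : ℝ) : Measure ℝ :=
  ENNReal.ofReal (mixWeight h3 x) • gaussianReal h1 1
    + ENNReal.ofReal (1 - mixWeight h3 x) • gaussianReal (-h1) 1

/-- Relay-to-destination Gaussian channel `G(v) = N(h2 ⬝ v, 1)`. -/
noncomputable def Gchan (h2 : ℝ) : ℝ → Measure ℝ := fun v => gaussianReal (h2 * v) 1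

/-- The marginal law of the relay's observation: `(1/2) N(h1,1) + (1/2) N(-h1,1)`. -/
noncomputable def relayMarginal (h1 : ℝ) : Measure ℝ :=
  (1 / 2 : ℝ≥0∞) • gaussianReal h1 1 + (1 / 2 : ℝ≥0∞) • gaussianReal (-h1) 1

/-- The constant attack kernel `κ₀(u) = (1/2) N(h1,1) + (1/2) N(-h1,1)` for every `u`. -/
noncomputable def kappa0 (h1 : ℝ) : Kernel ℝ ℝ := Kernel.const ℝ (relayMarginal h1)

lemma mixWeight_zero (x : ℝ) : mixWeight 0 x = 1 / 2 := by
  unfold mixWeight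
  rw [add_zero, sub_zero]
  have h := Real.exp_pos (-x ^ 2 / 2)
  field_simp
  ring

lemma muX_zero (h1 x : ℝ) : muX h1 0 x = relayMarginal h1 := by
  unfold muX relayMarginal
  rw [mixWeight_zero]
  norm_num
  rw [ENNReal.ofReal_div_of_pos (by norm_num)]
  norm_num

lemma relayMarginal_singleton (h1 u : ℝ) : relayMarginal h1 {u} = 0 := by
  have h0 : (volume : Measure ℝ) {u} = 0 := measure_singleton u
  have h1' := gaussianReal_absolutelyContinuous h1 (one_ne_zero) h0
  have h2' := gaussianReal_absolutelyContinuous (-h1) (one_ne_zero) h0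
  simp [relayMarginal, h1', h2']

lemma relayMarginal_univ (h1 : ℝ) : relayMarginal h1 Set.univ = 1 := by
  simp [relayMarginal]
  rw [ENNReal.inv_two_add_inv_two]

/-- **Manipulability of AWGN relay networks without direct channel.**
If `h3 = 0`, the constant kernel `κ₀` (sending an independent copy of the relay's
input marginal) leaves every conditional output law unchanged, yet `κ₀ u ≠ δ_u`
for every `u`; hence the observation channel is manipulable. -/
theorem manipulable_without_direct_channel (h1 h2 h3 : ℝ) (hh3 : h3 = 0) :
    (∀ x : ℝ,
      ((muX h1 h3 x).bind (kappa0 h1 ·)).bind (Gchan h2) = (muX h1 h3 x).bind (Gchan h2))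
    ∧ (∀ u : ℝ, kappa0 h1 u ≠ Measure.dirac u) := by
  subst hh3
  constructor
  · intro x
    have : (muX h1 0 x).bind (kappa0 h1 ·) = muX h1 0 x := by
      rw [muX_zero]
      show (relayMarginal h1).bind (fun _ => relayMarginal h1) = _
      rw [Measure.bind_const, relayMarginal_univ, one_smul]
    rw [this]
  · intro u h
    have h1' : relayMarginal h1 {u} = 0 := relayMarginal_singleton h1 u
    have : kappa0 h1 u {u} = Measure.dirac u {u} := by rw [h]
    rw [Measure.dirac_apply' u (measurableSet_singleton u)] at this
    simp [kappa0, h1'] at this
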